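/- Let u : ℝ³ → ℝ be measurable with u² locally integrable, and suppose u is not almost everywhere zero (equivalently, ∫_{B(0,R₀)} u(y)² dy > 0 for some R₀ > 0). Then there exists c > 0 such that the Newtonian potential satisfies φ_u(x) ≥ c/(1 + |x|) for all x ∈ ℝ³. -/

import Mathlib

/-!
For `y` in the ball `B(0, R₀)` the distance `‖x - y‖` is at most `(1 + R₀)(1 + ‖x‖)`, so on that
ball the Newtonian kernel is bounded below by `1 / (4π (1 + R₀)(1 + ‖x‖))`. Integrating `u²`
against it over the ball alone already gives `φ_u(x) ≥ (∫_{B(0,R₀)} u²) / (4π (1 + R₀)(1 + ‖x‖))`.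
-/

open MeasureTheory Real Filter Metric

noncomputable section

abbrev E3 := EuclideanSpace ℝ (Fin 3)

/-- Newtonian potential of `u²`. -/
def phi (u : E3 → ℝ) (x : E3) : ℝ := ∫ y, u y ^ 2 / (4 * π * ‖x - y‖)

/-- Dirichlet energy `A(u) = ∫ |∇u|²`. -/
def Aen (u : E3 → ℝ) : ℝ := ∫ x, ‖gradient u x‖ ^ 2

/-- Coulomb energy `B(u)`. -/
def Ben (u : E3 → ℝ) : ℝ := ∫ x, ∫ y, u x ^ 2 * u y ^ 2 / (4 * π * ‖x - y‖)

/-- `C_p(u) = ∫ |u|^(p+1)`. -/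
def Cen (p : ℝ) (u : E3 → ℝ) : ℝ := ∫ x, |u x| ^ (p + 1)

/-- The energy functional `I_{μ,p}`. -/
def energy (μ p : ℝ) (u : E3 → ℝ) : ℝ :=
  (1/2) * Aen u + (1/4) * Ben u - (μ / (p + 1)) * Cen p u

/-- The Laplacian as the sum of the pure second derivatives. -/
def laplacian (u : E3 → ℝ) (x : E3) : ℝ :=
  ∑ i : Fin 3,
    iteratedFDeriv ℝ 2 u x ![EuclideanSpace.single i 1, EuclideanSpace.single i 1]

/-- A finite-energy classical solution of `-Δu + φ_u u = μ |u|^{p-1} u`. -/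
structure IsFESolution (p μ : ℝ) (u : E3 → ℝ) : Prop where
  smooth : ContDiff ℝ 2 u
  finA : Integrable (fun x => ‖gradient u x‖ ^ 2)
  finB : Integrable (fun z : E3 × E3 => u z.1 ^ 2 * u z.2 ^ 2 / (4 * π * ‖z.1 - z.2‖))
  finC : Integrable (fun x => |u x| ^ (p + 1))
  phiInt : ∀ x, Integrable (fun y => u y ^ 2 / (4 * π * ‖x - y‖))
  eq : ∀ x, -laplacian u x + phi u x * u x = μ * |u x| ^ (p - 1) * u x

/-- A radial function on `ℝ³`. -/
def IsRadial (u : E3 → ℝ) : Prop := ∃ f : ℝ → ℝ, ∀ x, u x = f ‖x‖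

/-- The Newtonian potential of `u²` as a `[0,∞]`-valued integral. -/
def phiL (u : E3 → ℝ) (x : E3) : ENNReal :=
  ∫⁻ y, ENNReal.ofReal (u y ^ 2 / (4 * π * ‖x - y‖))

theorem norm_sub_le_one_add_mul_one_add_norm {G : Type*} [SeminormedAddCommGroup G]
    {x y : G} {R : ℝ} (hy : ‖y‖ ≤ R) : ‖x - y‖ ≤ (1 + R) * (1 + ‖x‖) := by
  have hR : 0 ≤ R := (norm_nonneg y).trans hy
  nlinarith [norm_sub_le x y, norm_nonneg x, mul_nonneg hR (norm_nonneg x)]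

theorem ofReal_integral_le_lintegral_ofReal {α : Type*} [MeasurableSpace α] {μ : Measure α}
    {f : α → ℝ} (hf : 0 ≤ᵐ[μ] f) :
    ENNReal.ofReal (∫ a, f a ∂μ) ≤ ∫⁻ a, ENNReal.ofReal (f a) ∂μ :=
  calc ENNReal.ofReal (∫ a, f a ∂μ) = ‖∫ a, f a ∂μ‖ₑ :=
        (Real.enorm_of_nonneg (integral_nonneg_of_ae hf)).symm
    _ ≤ ∫⁻ a, ‖f a‖ₑ ∂μ := enorm_integral_le_lintegral_enorm f
    _ = ∫⁻ a, ENNReal.ofReal (f a) ∂μ :=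
        lintegral_congr_ae (hf.mono fun _ ha => Real.enorm_of_nonneg ha)

theorem sq_div_newtonKernel_ge_of_mem_ball {G : Type*} [NormedAddCommGroup G] {x y : G} {R : ℝ}
    (hy : y ∈ ball (0 : G) R) (hxy : y ≠ x) (a : ℝ) :
    a ^ 2 / (4 * π * ((1 + R) * (1 + ‖x‖))) ≤ a ^ 2 / (4 * π * ‖x - y‖) := by
  have hdist : 0 < ‖x - y‖ := norm_sub_pos_iff.mpr hxy.symm
  have hyR : ‖y‖ ≤ R := (mem_ball_zero_iff.mp hy).le
  gcongr
  exact norm_sub_le_one_add_mul_one_add_norm hyR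

theorem setIntegral_ball_div_le_phiL (u : E3 → ℝ) (R : ℝ) (x : E3) :
    ENNReal.ofReal ((∫ y in ball (0 : E3) R, u y ^ 2) / (4 * π * ((1 + R) * (1 + ‖x‖))))
      ≤ phiL u x := by
  set M := 4 * π * ((1 + R) * (1 + ‖x‖))
  calc ENNReal.ofReal ((∫ y in ball (0 : E3) R, u y ^ 2) / M)
      = ENNReal.ofReal (∫ y in ball (0 : E3) R, u y ^ 2 / M) := by rw [integral_div]
    _ ≤ ∫⁻ y in ball (0 : E3) R, ENNReal.ofReal (u y ^ 2 / M) := by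
        refine ofReal_integral_le_lintegral_ofReal ?_
        filter_upwards [ae_restrict_mem measurableSet_ball] with y hy
        have hR : 0 < R := (norm_nonneg y).trans_lt (mem_ball_zero_iff.mp hy)
        positivity
    _ ≤ ∫⁻ y in ball (0 : E3) R, ENNReal.ofReal (u y ^ 2 / (4 * π * ‖x - y‖)) := by
        -- the kernel bound fails only at `y = x`, where real division by `0` yields `0`
        refine lintegral_mono_ae ?_
        filter_upwards [ae_restrict_mem measurableSet_ball, ae_restrict_of_ae (Measure.ae_ne _ x)]
          with y hy hxy
        exact ENNReal.ofReal_le_ofReal (sq_div_newtonKernel_ge_of_mem_ball hy hxy _)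
    _ ≤ phiL u x := setLIntegral_le_lintegral _ _

theorem newtonian_potential_lower_bound_general (u : E3 → ℝ)
    (hne : ∃ R₀ > 0, 0 < ∫ y in ball (0 : E3) R₀, u y ^ 2) :
    ∃ c > 0, ∀ x : E3, ENNReal.ofReal (c / (1 + ‖x‖)) ≤ phiL u x := by
  obtain ⟨R₀, hR₀, hmass⟩ := hne
  refine ⟨(∫ y in ball (0 : E3) R₀, u y ^ 2) / (4 * π * (1 + R₀)), by positivity, fun x => ?_⟩
  simpa only [div_div, mul_assoc] using setIntegral_ball_div_le_phiL u R₀ x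

/-- lower bound `φ_u(x) ≥ c/(1+|x|)` for a nontrivial charge. -/
theorem newtonian_potential_lower_bound (u : E3 → ℝ) (hmeas : Measurable u)
    (hloc : LocallyIntegrable (fun x => u x ^ 2) (volume : Measure E3))
    (hne : ∃ R₀ > 0, 0 < ∫ y in ball (0 : E3) R₀, u y ^ 2) :
    ∃ c > 0, ∀ x : E3, ENNReal.ofReal (c / (1 + ‖x‖)) ≤ phiL u x :=
  newtonian_potential_lower_bound_general u hne
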